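/- For all distinct ℓ, m ∈ {1,…,n}: Q_ℓ ∘ Q_m = Q_m ∘ Q_ℓ if and only if {ℓ, m} ∉ NC. (That is, the propositional quantum variables interpreting B_ℓ and B_m in the quantum structure I^{B',NC,f} are compatible if and only if the pair (B_ℓ, B_m) is not in NC.) -/

import Mathlib

noncomputable section

variable {H : Type*} [NormedAddCommGroup H] [InnerProductSpace ℂ H] [CompleteSpace H]

/-- The rank-one operator `|x⟩⟨y| : z ↦ ⟨y, z⟩ • x`. -/
def ketbra (x y : H) : H →L[ℂ] H :=
  (innerSL ℂ y).smulRight x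

/-- `wvec a b = (1/√2)·(a + b)`. -/
def wvec (a b : H) : H :=
  ((Real.sqrt 2 : ℂ))⁻¹ • (a + b)

/-- The projection `Q_j` associated with the propositional symbol `B_j` in the quantum
structure `I^{B',NC,f}`: here a two-element subset `{min A, max A}` in `NC` is encoded as
the ordered pair `p = (min A, max A)` with `p.1 < p.2`. -/
def Qop (n : ℕ) (NC : Finset (Fin n × Fin n)) (u : (Fin n → Bool) → H)
    (a b : Fin n × Fin n → H) (j : Fin n) : H →L[ℂ] H :=
  (∑ v ∈ Finset.univ.filter (fun v : Fin n → Bool => v j = true), ketbra (u v) (u v)) +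
    ∑ p ∈ NC,
      (if j = p.1 then ketbra (wvec (a p) (b p)) (wvec (a p) (b p))
       else if j = p.2 then ketbra (b p) (b p)
       else ketbra (a p) (a p) + ketbra (b p) (b p))

/-- The family consisting of the vectors `u_v` (one for each valuation `v : Fin n → Bool`)
together with the two vectors `a_A, b_A` for each `A ∈ NC`; it is required to be an
orthonormal basis of `H`. -/
def fam (n : ℕ) (NC : Finset (Fin n × Fin n)) (u : (Fin n → Bool) → H)
    (a b : Fin n × Fin n → H) : ((Fin n → Bool) ⊕ ({p // p ∈ NC} × Bool)) → H
  | .inl v => u v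
  | .inr (p, d) => if d then b p.1 else a p.1

set_option linter.unusedSectionVars false
set_option linter.unusedVariables false

section lemmas

variable {n : ℕ} {NC : Finset (Fin n × Fin n)} {u : (Fin n → Bool) → H}
  {a b : Fin n × Fin n → H}

lemma ketbra_apply (x y z : H) : ketbra x y z = (inner ℂ y z : ℂ) • x := rfl

variable (hon : Orthonormal ℂ (fam n NC u a b))
include hon

lemma inner_uu (v w : Fin n → Bool) :
    (inner ℂ (u v) (u w) : ℂ) = if v = w then 1 else 0 := by
  have := orthonormal_iff_ite.mp hon (Sum.inl v) (Sum.inl w)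
  simpa [fam] using this

lemma inner_au (v : Fin n → Bool) {p : Fin n × Fin n} (hp : p ∈ NC) :
    (inner ℂ (a p) (u v) : ℂ) = 0 := by
  have := orthonormal_iff_ite.mp hon (Sum.inr (⟨p, hp⟩, false)) (Sum.inl v)
  simpa [fam] using this

lemma inner_bu (v : Fin n → Bool) {p : Fin n × Fin n} (hp : p ∈ NC) :
    (inner ℂ (b p) (u v) : ℂ) = 0 := by
  have := orthonormal_iff_ite.mp hon (Sum.inr (⟨p, hp⟩, true)) (Sum.inl v)
  simpa [fam] using this

lemma inner_ua (v : Fin n → Bool) {p : Fin n × Fin n} (hp : p ∈ NC) :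
    (inner ℂ (u v) (a p) : ℂ) = 0 := by
  have := orthonormal_iff_ite.mp hon (Sum.inl v) (Sum.inr (⟨p, hp⟩, false))
  simpa [fam] using this

lemma inner_ub (v : Fin n → Bool) {p : Fin n × Fin n} (hp : p ∈ NC) :
    (inner ℂ (u v) (b p) : ℂ) = 0 := by
  have := orthonormal_iff_ite.mp hon (Sum.inl v) (Sum.inr (⟨p, hp⟩, true))
  simpa [fam] using this

lemma inner_aa {p q : Fin n × Fin n} (hp : p ∈ NC) (hq : q ∈ NC) :
    (inner ℂ (a p) (a q) : ℂ) = if p = q then 1 else 0 := by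
  have := orthonormal_iff_ite.mp hon (Sum.inr (⟨p, hp⟩, false)) (Sum.inr (⟨q, hq⟩, false))
  simpa [fam, Subtype.ext_iff, Prod.ext_iff] using this

lemma inner_bb {p q : Fin n × Fin n} (hp : p ∈ NC) (hq : q ∈ NC) :
    (inner ℂ (b p) (b q) : ℂ) = if p = q then 1 else 0 := by
  have := orthonormal_iff_ite.mp hon (Sum.inr (⟨p, hp⟩, true)) (Sum.inr (⟨q, hq⟩, true))
  simpa [fam, Subtype.ext_iff, Prod.ext_iff] using this

lemma inner_ab {p q : Fin n × Fin n} (hp : p ∈ NC) (hq : q ∈ NC) :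
    (inner ℂ (a p) (b q) : ℂ) = 0 := by
  have := orthonormal_iff_ite.mp hon (Sum.inr (⟨p, hp⟩, false)) (Sum.inr (⟨q, hq⟩, true))
  simpa [fam] using this

lemma inner_ba {p q : Fin n × Fin n} (hp : p ∈ NC) (hq : q ∈ NC) :
    (inner ℂ (b p) (a q) : ℂ) = 0 := by
  have := orthonormal_iff_ite.mp hon (Sum.inr (⟨p, hp⟩, true)) (Sum.inr (⟨q, hq⟩, false))
  simpa [fam] using this

lemma inner_wu (v : Fin n → Bool) {p : Fin n × Fin n} (hp : p ∈ NC) :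
    (inner ℂ (wvec (a p) (b p)) (u v) : ℂ) = 0 := by
  simp [wvec, inner_smul_left, inner_add_left, inner_au hon v hp, inner_bu hon v hp]

lemma inner_wa {p : Fin n × Fin n} (hp : p ∈ NC) :
    (inner ℂ (wvec (a p) (b p)) (a p) : ℂ) = ((Real.sqrt 2 : ℂ))⁻¹ := by
  simp [wvec, inner_smul_left, inner_add_left, inner_aa hon hp hp, inner_ba hon hp hp, (by simpa [fam] using hon.1 (Sum.inr (⟨p, hp⟩, false)) : ‖a p‖ = 1)]

lemma inner_wb {p : Fin n × Fin n} (hp : p ∈ NC) :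
    (inner ℂ (wvec (a p) (b p)) (b p) : ℂ) = ((Real.sqrt 2 : ℂ))⁻¹ := by
  simp [wvec, inner_smul_left, inner_add_left, inner_bb hon hp hp, inner_ab hon hp hp, (by simpa [fam] using hon.1 (Sum.inr (⟨p, hp⟩, true)) : ‖b p‖ = 1)]

lemma Qop_u (j : Fin n) (v : Fin n → Bool) :
    Qop n NC u a b j (u v) = if v j then u v else 0 := by
  classical
  rw [Qop]
  simp only [ContinuousLinearMap.add_apply, ContinuousLinearMap.sum_apply]
  have h2 : ∑ p ∈ NC,
      (if j = p.1 then ketbra (wvec (a p) (b p)) (wvec (a p) (b p))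
       else if j = p.2 then ketbra (b p) (b p)
       else ketbra (a p) (a p) + ketbra (b p) (b p)) (u v) = 0 := by
    refine Finset.sum_eq_zero fun p hp => ?_
    split_ifs <;>
      simp [ContinuousLinearMap.add_apply, ketbra_apply, inner_wu hon v hp,
        inner_au hon v hp, inner_bu hon v hp]
  rw [h2, add_zero]
  have h1 : ∀ w ∈ Finset.univ.filter (fun w : Fin n → Bool => w j = true),
      ketbra (u w) (u w) (u v) = if w = v then u v else 0 := by
    intro w _
    rw [ketbra_apply, inner_uu hon w v]
    split_ifs with h
    · subst h; simp
    · simp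
  rw [Finset.sum_congr rfl h1, Finset.sum_ite_eq']
  simp

lemma Qop_a {p : Fin n × Fin n} (hp : p ∈ NC) (j : Fin n) :
    Qop n NC u a b j (a p) =
      if j = p.1 then ((Real.sqrt 2 : ℂ))⁻¹ • wvec (a p) (b p)
      else if j = p.2 then 0 else a p := by
  classical
  rw [Qop]
  simp only [ContinuousLinearMap.add_apply, ContinuousLinearMap.sum_apply]
  have hu : ∑ w ∈ Finset.univ.filter (fun w : Fin n → Bool => w j = true),
      ketbra (u w) (u w) (a p) = 0 := by
    refine Finset.sum_eq_zero fun w _ => ?_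
    simp [ketbra_apply, inner_ua hon w hp]
  rw [hu, zero_add, Finset.sum_eq_single_of_mem p hp]
  · split_ifs <;> simp [ketbra_apply, ContinuousLinearMap.add_apply, inner_wa hon hp,
      inner_ba hon hp hp, inner_aa hon hp hp, (by simpa [fam] using hon.1 (Sum.inr (⟨p, hp⟩, false)) : ‖a p‖ = 1)]
  · intro q hq hqp
    have h1 : (inner ℂ (a q) (a p) : ℂ) = 0 := by simp [inner_aa hon hq hp, hqp]
    have h2 : (inner ℂ (b q) (a p) : ℂ) = 0 := inner_ba hon hq hp
    have h3 : (inner ℂ (wvec (a q) (b q)) (a p) : ℂ) = 0 := by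
      simp [wvec, inner_smul_left, inner_add_left, h1, h2]
    split_ifs <;> simp [ketbra_apply, ContinuousLinearMap.add_apply, h1, h2, h3]

lemma Qop_b {p : Fin n × Fin n} (hp : p ∈ NC) (j : Fin n) :
    Qop n NC u a b j (b p) =
      if j = p.1 then ((Real.sqrt 2 : ℂ))⁻¹ • wvec (a p) (b p) else b p := by
  classical
  rw [Qop]
  simp only [ContinuousLinearMap.add_apply, ContinuousLinearMap.sum_apply]
  have hu : ∑ w ∈ Finset.univ.filter (fun w : Fin n → Bool => w j = true),
      ketbra (u w) (u w) (b p) = 0 := by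
    refine Finset.sum_eq_zero fun w _ => ?_
    simp [ketbra_apply, inner_ub hon w hp]
  rw [hu, zero_add, Finset.sum_eq_single_of_mem p hp]
  · split_ifs <;> simp [ketbra_apply, ContinuousLinearMap.add_apply, inner_wb hon hp,
      inner_ab hon hp hp, inner_bb hon hp hp, (by simpa [fam] using hon.1 (Sum.inr (⟨p, hp⟩, true)) : ‖b p‖ = 1)]
  · intro q hq hqp
    have h1 : (inner ℂ (b q) (b p) : ℂ) = 0 := by simp [inner_bb hon hq hp, hqp]
    have h2 : (inner ℂ (a q) (b p) : ℂ) = 0 := inner_ab hon hq hp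
    have h3 : (inner ℂ (wvec (a q) (b q)) (b p) : ℂ) = 0 := by
      simp [wvec, inner_smul_left, inner_add_left, h1, h2]
    split_ifs <;> simp [ketbra_apply, ContinuousLinearMap.add_apply, h1, h2, h3]

lemma Qop_w {p : Fin n × Fin n} (hp : p ∈ NC) (j : Fin n) :
    Qop n NC u a b j (wvec (a p) (b p)) =
      if j = p.1 then wvec (a p) (b p)
      else if j = p.2 then ((Real.sqrt 2 : ℂ))⁻¹ • b p
      else wvec (a p) (b p) := by
  have h2' : ((Real.sqrt 2 : ℝ) : ℂ) * ((Real.sqrt 2 : ℝ) : ℂ) = 2 := by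
    norm_cast
    exact Real.mul_self_sqrt (by norm_num)
  have hs : ((Real.sqrt 2 : ℂ))⁻¹ * ((Real.sqrt 2 : ℂ))⁻¹ = 2⁻¹ := by
    rw [← mul_inv, h2']
  rw [wvec, map_smul, map_add, Qop_a hon hp, Qop_b hon hp]
  split_ifs with h1 h2
  · rw [smul_add, smul_smul, hs, ← add_smul]
    norm_num [wvec]
  · rw [zero_add]
  · rfl


lemma comm_u (l m : Fin n) (v : Fin n → Bool) :
    Qop n NC u a b l (Qop n NC u a b m (u v)) =
      Qop n NC u a b m (Qop n NC u a b l (u v)) := by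
  rw [Qop_u hon, Qop_u hon]
  split_ifs <;> simp_all [Qop_u hon]

lemma comm_a {p : Fin n × Fin n} (hp : p ∈ NC) (hpp : p.1 ≠ p.2) {l m : Fin n} (hlm : l ≠ m)
    (hA : ¬(l = p.1 ∧ m = p.2)) (hB : ¬(m = p.1 ∧ l = p.2)) :
    Qop n NC u a b l (Qop n NC u a b m (a p)) =
      Qop n NC u a b m (Qop n NC u a b l (a p)) := by
  rw [Qop_a hon hp, Qop_a hon hp]
  by_cases hl1 : l = p.1 <;> by_cases hm1 : m = p.1 <;> by_cases hl2 : l = p.2 <;>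
    by_cases hm2 : m = p.2 <;>
    simp_all [map_smul, Qop_w hon hp, Qop_a hon hp, Qop_b hon hp]

lemma comm_b {p : Fin n × Fin n} (hp : p ∈ NC) (hpp : p.1 ≠ p.2) {l m : Fin n} (hlm : l ≠ m)
    (hA : ¬(l = p.1 ∧ m = p.2)) (hB : ¬(m = p.1 ∧ l = p.2)) :
    Qop n NC u a b l (Qop n NC u a b m (b p)) =
      Qop n NC u a b m (Qop n NC u a b l (b p)) := by
  rw [Qop_b hon hp, Qop_b hon hp]
  by_cases hl1 : l = p.1 <;> by_cases hm1 : m = p.1 <;> by_cases hl2 : l = p.2 <;>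
    by_cases hm2 : m = p.2 <;>
    simp_all [map_smul, Qop_w hon hp, Qop_a hon hp, Qop_b hon hp]

end lemmas

/-- For distinct `ℓ, m`, the projections `Q_ℓ` and `Q_m` commute iff the pair `{ℓ, m}` is
not in `NC`. -/
theorem stmt10 (n : ℕ) (hn : 1 ≤ n) (NC : Finset (Fin n × Fin n))
    (hNC : ∀ p ∈ NC, p.1 < p.2)
    (u : (Fin n → Bool) → H) (a b : Fin n × Fin n → H)
    (hon : Orthonormal ℂ (fam n NC u a b))
    (htot : (Submodule.span ℂ (Set.range (fam n NC u a b))).topologicalClosure = ⊤)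
    (l m : Fin n) (hlm : l ≠ m) :
    (Qop n NC u a b l).comp (Qop n NC u a b m) =
        (Qop n NC u a b m).comp (Qop n NC u a b l) ↔
      ((l, m) ∉ NC ∧ (m, l) ∉ NC) := by
  classical
  have hs0 : ((Real.sqrt 2 : ℂ))⁻¹ ≠ 0 := by
    have h2 : Real.sqrt 2 ≠ 0 := by positivity
    exact inv_ne_zero (Complex.ofReal_ne_zero.mpr h2)
  constructor
  · intro hcomm
    constructor
    · intro hmem
      have hL : Qop n NC u a b l (Qop n NC u a b m (a (l, m))) = 0 := by
        rw [Qop_a hon hmem, if_neg (show ¬ m = (l, m).1 from fun h => hlm h.symm),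
          if_pos rfl, map_zero]
      have hR : Qop n NC u a b m (Qop n NC u a b l (a (l, m))) =
          ((Real.sqrt 2 : ℂ))⁻¹ • (((Real.sqrt 2 : ℂ))⁻¹ • b (l, m)) := by
        rw [Qop_a hon hmem, if_pos rfl, map_smul, Qop_w hon hmem,
          if_neg (show ¬ m = (l, m).1 from fun h => hlm h.symm), if_pos rfl]
      have heq : (0 : H) = ((Real.sqrt 2 : ℂ))⁻¹ • (((Real.sqrt 2 : ℂ))⁻¹ • b (l, m)) := by
        have := congrArg (fun T : H →L[ℂ] H => T (a (l, m))) hcomm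
        simpa [ContinuousLinearMap.comp_apply, hL, hR] using this
      have hb0 : b (l, m) = 0 := by
        simpa [smul_eq_zero, hs0] using heq.symm
      have hb1 : ‖b (l, m)‖ = 1 := by
        simpa [fam] using hon.1 (Sum.inr (⟨(l, m), hmem⟩, true))
      rw [hb0] at hb1
      simp at hb1
    · intro hmem
      have hL : Qop n NC u a b m (Qop n NC u a b l (a (m, l))) = 0 := by
        rw [Qop_a hon hmem, if_neg (show ¬ l = (m, l).1 from fun h => hlm h),
          if_pos rfl, map_zero]
      have hR : Qop n NC u a b l (Qop n NC u a b m (a (m, l))) =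
          ((Real.sqrt 2 : ℂ))⁻¹ • (((Real.sqrt 2 : ℂ))⁻¹ • b (m, l)) := by
        rw [Qop_a hon hmem, if_pos rfl, map_smul, Qop_w hon hmem,
          if_neg (show ¬ l = (m, l).1 from fun h => hlm h), if_pos rfl]
      have heq : (0 : H) = ((Real.sqrt 2 : ℂ))⁻¹ • (((Real.sqrt 2 : ℂ))⁻¹ • b (m, l)) := by
        have := congrArg (fun T : H →L[ℂ] H => T (a (m, l))) hcomm
        simpa [ContinuousLinearMap.comp_apply, hL, hR] using this.symm
      have hb0 : b (m, l) = 0 := by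
        simpa [smul_eq_zero, hs0] using heq.symm
      have hb1 : ‖b (m, l)‖ = 1 := by
        simpa [fam] using hon.1 (Sum.inr (⟨(m, l), hmem⟩, true))
      rw [hb0] at hb1
      simp at hb1
  · rintro ⟨h1, h2⟩
    have hd : Dense (Submodule.span ℂ (Set.range (fam n NC u a b)) : Set H) :=
      Submodule.dense_iff_topologicalClosure_eq_top.mpr htot
    refine ContinuousLinearMap.ext_on hd ?_
    intro x hx
    obtain ⟨i, rfl⟩ := hx
    simp only [ContinuousLinearMap.comp_apply]
    match i with
    | .inl v =>
      simpa [fam] using comm_u hon l m v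
    | .inr (⟨p, hp⟩, d) =>
      have hpp : p.1 ≠ p.2 := (hNC p hp).ne
      have hA : ¬(l = p.1 ∧ m = p.2) := by
        rintro ⟨e1, e2⟩
        exact h1 (by rw [e1, e2, Prod.mk.eta]; exact hp)
      have hB : ¬(m = p.1 ∧ l = p.2) := by
        rintro ⟨e1, e2⟩
        exact h2 (by rw [e1, e2, Prod.mk.eta]; exact hp)
      cases d
      · simpa [fam] using comm_a hon hp hpp hlm hA hB
      · simpa [fam] using comm_b hon hp hpp hlm hA hB


end
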